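/- arXiv:2109.06779 — 6 statements merged into one kernel-verified Lean document; each statement's English description precedes it below -/
import Mathlib

section
/- The autonomous domination number of a graph is bounded above by n − δ, where n is the order of the graph and δ is its minimum degree. -/
open SimpleGraph

variable {V : Type*} [DecidableEq V]

/-- `S` is a dominating set of `G`. -/
def Dominates (G : SimpleGraph V) (S : Finset V) : Prop :=
  ∀ v : V, v ∈ S ∨ ∃ u ∈ S, G.Adj u v

/-- Dominating sets `S` and `S'` are adjacent: they differ by moving one
guard along an edge of `G`. -/
def AdjacentSets (G : SimpleGraph V) (S S' : Finset V) : Prop :=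
  ∃ v v', v ∈ S ∧ v' ∉ S ∧ G.Adj v v' ∧ S' = insert v' (S.erase v)

/-- `S` is a secure dominating set. -/
def SecureDominating (G : SimpleGraph V) (S : Finset V) : Prop :=
  Dominates G S ∧ ∀ v ∉ S, ∃ S', Dominates G S' ∧ AdjacentSets G S S' ∧ v ∈ S'

/-- An autonomously dominating family. -/
def AutFamily (G : SimpleGraph V) (F : Set (Finset V)) : Prop :=
  (∀ S ∈ F, Dominates G S) ∧
  (∀ S ∈ F, ∀ v ∉ S, ∃ S' ∈ F, AdjacentSets G S S' ∧ v ∈ S') ∧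
  (∀ S ∈ F, ∀ S', Dominates G S' → AdjacentSets G S S' → S' ∈ F)

/-- An autonomously dominating set. -/
def AutDomSet (G : SimpleGraph V) (S : Finset V) : Prop :=
  ∃ F, AutFamily G F ∧ S ∈ F

/-- The autonomous domination number. -/
noncomputable def autDomNum (G : SimpleGraph V) : ℕ :=
  sInf {k | ∃ S : Finset V, AutDomSet G S ∧ S.card = k}

/-- An eternally dominating family (no closure condition). -/
def EternalFamily (G : SimpleGraph V) (F : Set (Finset V)) : Prop :=
  (∀ S ∈ F, Dominates G S) ∧
  (∀ S ∈ F, ∀ v ∉ S, ∃ S' ∈ F, AdjacentSets G S S' ∧ v ∈ S')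

/-- The eternal domination number. -/
noncomputable def eternalDomNum (G : SimpleGraph V) : ℕ :=
  sInf {k | ∃ (F : Set (Finset V)) (S : Finset V),
    EternalFamily G F ∧ S ∈ F ∧ S.card = k}

/-- The domination number. -/
noncomputable def domNum (G : SimpleGraph V) : ℕ :=
  sInf {k | ∃ S : Finset V, Dominates G S ∧ S.card = k}

/-!
Put `k = n - δ` guards on the graph, anywhere. A vertex `v` outside the guarded set with no guarded
neighbour would have its closed neighbourhood, of size at least `δ + 1`, among the `n - k ≤ δ`
unguarded vertices; so every `k`-set dominates. Moving a guard keeps the number of guards, hence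
the family of all `k`-sets is closed under moves, and it lets a guard reach any unguarded vertex
from a neighbouring guarded one.
-/

theorem dominates_of_card_compl_le_minDegree [Fintype V] {G : SimpleGraph V} [DecidableRel G.Adj]
    {S : Finset V} (h : Sᶜ.card ≤ G.minDegree) : Dominates G S := by
  intro v
  by_contra! ⟨hvS, hno⟩
  have hsub : insert v (G.neighborFinset v) ⊆ Sᶜ := by
    intro u hu
    rw [Finset.mem_insert, mem_neighborFinset] at hu
    rcases hu with rfl | hvu
    · exact Finset.mem_compl.2 hvS
    · exact Finset.mem_compl.2 fun huS => hno u huS hvu.symm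
  have hcard := Finset.card_le_card hsub
  rw [Finset.card_insert_of_notMem (notMem_neighborFinset_self G v),
    card_neighborFinset_eq_degree] at hcard
  have := G.minDegree_le_degree v
  omega

theorem AdjacentSets.card_eq {G : SimpleGraph V} {S S' : Finset V} (h : AdjacentSets G S S') :
    S'.card = S.card := by
  obtain ⟨v, v', hv, hv', -, rfl⟩ := h
  rw [Finset.card_insert_of_notMem fun h => hv' (Finset.mem_of_mem_erase h),
    Finset.card_erase_add_one hv]

theorem autFamily_setOf_card_eq {G : SimpleGraph V} {k : ℕ}
    (hdom : ∀ S : Finset V, S.card = k → Dominates G S) :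
    AutFamily G {S | S.card = k} := by
  refine ⟨hdom, fun S hS v hv => ?_, fun S hS S' _ hSS' => hSS'.card_eq.trans hS⟩
  obtain hvS | ⟨u, hu, huv⟩ := hdom S hS v
  · exact absurd hvS hv
  · have hmove : AdjacentSets G S (insert v (S.erase u)) := ⟨u, v, hu, hv, huv, rfl⟩
    exact ⟨_, hmove.card_eq.trans hS, hmove, Finset.mem_insert_self v _⟩

theorem AutFamily.autDomNum_le {G : SimpleGraph V} {F : Set (Finset V)} (hF : AutFamily G F)
    {S : Finset V} (hS : S ∈ F) : autDomNum G ≤ S.card :=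
  Nat.sInf_le ⟨S, ⟨F, hF, hS⟩, rfl⟩

theorem autDomNum_le_card_sub_minDegree_general {V : Type*} [DecidableEq V] [Fintype V]
    (G : SimpleGraph V) [DecidableRel G.Adj] :
    autDomNum G ≤ Fintype.card V - G.minDegree := by
  set k := Fintype.card V - G.minDegree
  have hdom : ∀ S : Finset V, S.card = k → Dominates G S := fun S hS =>
    dominates_of_card_compl_le_minDegree (by rw [Finset.card_compl]; omega)
  obtain ⟨S, -, hS⟩ := Finset.exists_subset_card_eq (s := (Finset.univ : Finset V)) (n := k)
    (by rw [Finset.card_univ]; omega)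
  calc autDomNum G ≤ S.card := (autFamily_setOf_card_eq hdom).autDomNum_le hS
    _ = k := hS

/-- `γ_aut(G) ≤ n - δ`. -/
theorem autDomNum_le_card_sub_minDegree {V : Type*} [DecidableEq V] [Fintype V] [Nonempty V]
    (G : SimpleGraph V) [DecidableRel G.Adj] :
    autDomNum G ≤ Fintype.card V - G.minDegree :=
  autDomNum_le_card_sub_minDegree_general G
end

section
/- The autonomous domination number of a graph is bounded below by the eternal domination number. -/
open SimpleGraph

variable {V : Type*} [DecidableEq V]

/-- The autonomous domination number is bounded below by the eternal
domination number. -/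
theorem eternalDomNum_le_autDomNum {V : Type*} [DecidableEq V] [Fintype V]
    (G : SimpleGraph V) :
    eternalDomNum G ≤ autDomNum G := by
  have hne : {k | ∃ S : Finset V, AutDomSet G S ∧ S.card = k}.Nonempty := by
    refine ⟨(Finset.univ : Finset V).card, Finset.univ, ⟨{Finset.univ}, ?_, rfl⟩, rfl⟩
    refine ⟨?_, ?_, ?_⟩
    · rintro S rfl v
      exact Or.inl (Finset.mem_univ v)
    · rintro S rfl v hv
      exact absurd (Finset.mem_univ v) hv
    · rintro S rfl S' _ ⟨v, v', _, hv', _⟩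
      exact absurd (Finset.mem_univ v') hv'
  have hmem := Nat.sInf_mem hne
  obtain ⟨S, ⟨F, hF, hSF⟩, hcard⟩ := hmem
  exact Nat.sInf_le ⟨F, S, ⟨hF.1, hF.2.1⟩, hSF, hcard⟩
end

section
/- Let G be a graph, F an autonomously dominating family, and I an independent set of vertices of G. Then there is a set S in F such that I ⊆ S. -/
open SimpleGraph

variable {V : Type*} [DecidableEq V]

/-- an autonomously dominating family contains a set including any given
independent set. -/
theorem autFamily_contains_superset_of_independent {V : Type*} [DecidableEq V] [Fintype V]
    (G : SimpleGraph V) (F : Set (Finset V)) (hF : AutFamily G F) (hne : F.Nonempty)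
    (I : Finset V) (hI : (↑I : Set V).Pairwise (fun u v => ¬ G.Adj u v)) :
    ∃ S ∈ F, I ⊆ S := by
  obtain ⟨hdom, hdef, hclose⟩ := hF
  obtain ⟨S0, hS0⟩ := hne
  suffices h : ∀ n, ∀ S ∈ F, (I \ S).card = n → ∃ S' ∈ F, I ⊆ S' from h _ S0 hS0 rfl
  intro n
  induction n using Nat.strong_induction_on with
  | _ n ih =>
    intro S hS hcard
    by_cases hsub : I ⊆ S
    · exact ⟨S, hS, hsub⟩
    · obtain ⟨v, hvI, hvS⟩ := Finset.not_subset.mp hsub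
      obtain ⟨S', hS'F, ⟨u, v', huS, hv'S, hadj, hS'eq⟩, hvS'⟩ := hdef S hS v hvS
      have hv' : v = v' := by
        rcases Finset.mem_insert.mp (hS'eq ▸ hvS') with h | h
        · exact h
        · exact absurd (Finset.mem_of_mem_erase h) hvS
      subst hv'
      have huI : u ∉ I := fun huI =>
        hI (Finset.mem_coe.mpr huI) (Finset.mem_coe.mpr hvI)
          (fun h => G.irrefl (h ▸ hadj)) hadj
      have hsubset : I \ S' ⊆ (I \ S).erase v := by
        intro x hx
        obtain ⟨hxI, hxS'⟩ := Finset.mem_sdiff.mp hx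
        refine Finset.mem_erase.mpr ⟨?_, Finset.mem_sdiff.mpr ⟨hxI, ?_⟩⟩
        · rintro rfl; exact hxS' hvS'
        · intro hxS
          apply hxS'
          rw [hS'eq]
          exact Finset.mem_insert_of_mem
            (Finset.mem_erase.mpr ⟨fun h => huI (h ▸ hxI), hxS⟩)
      have hlt : (I \ S').card < n := by
        calc (I \ S').card ≤ ((I \ S).erase v).card := Finset.card_le_card hsubset
          _ < (I \ S).card :=
            Finset.card_erase_lt_of_mem (Finset.mem_sdiff.mpr ⟨hvI, hvS⟩)
          _ = n := hcard
      exact ih _ hlt S' hS'F rfl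
end

section
/- Suppose the vertices of a graph G are partitioned into k sets S_1,…,S_k so that the induced subgraph on each S_i is complete, each |S_i| > k, and between any two distinct parts S_i and S_j there is at most one edge. Then the autonomous domination number of G equals k. -/
open SimpleGraph

variable {V : Type*} [DecidableEq V]

/-- clique partition with large parts and at most one edge between
parts determines the autonomous domination number. -/
theorem autDomNum_of_clique_partition {V : Type*} [DecidableEq V] [Fintype V]
    (G : SimpleGraph V) (k : ℕ) (P : Fin k → Finset V)
    (hdisj : ∀ i j, i ≠ j → Disjoint (P i) (P j))
    (hcover : ∀ v : V, ∃ i, v ∈ P i)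
    (hclique : ∀ i, G.IsClique ↑(P i))
    (hsize : ∀ i, k < (P i).card)
    (honeEdge : ∀ i j, i ≠ j →
      {e : V × V | e.1 ∈ P i ∧ e.2 ∈ P j ∧ G.Adj e.1 e.2}.Subsingleton) :
    autDomNum G = k := by
  classical
  -- uniqueness of parts
  have huniq : ∀ v (i j : Fin k), v ∈ P i → v ∈ P j → i = j := by
    intro v i j hi hj
    by_contra h
    exact Finset.disjoint_left.mp (hdisj i j h) hi hj
  have hne : ∀ i, (P i).Nonempty := fun i =>
    Finset.card_pos.mp (lt_of_le_of_lt (Nat.zero_le k) (hsize i))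
  -- every dominating set meets every part
  have Lmeet : ∀ S : Finset V, Dominates G S → ∀ i, ∃ v ∈ S, v ∈ P i := by
    intro S hS i
    by_contra h
    push_neg at h
    -- every v in P i has a dominator outside P i
    have hdom : ∀ v : V, ∃ u, v ∈ P i → u ∈ S ∧ G.Adj u v := by
      intro v
      by_cases hv : v ∈ P i
      · rcases hS v with hvS | ⟨u, huS, hadj⟩
        · exact absurd hv (h v hvS)
        · exact ⟨u, fun _ => ⟨huS, hadj⟩⟩
      · exact ⟨v, fun hv' => absurd hv' hv⟩
    choose u hu using hdom
    -- map each v ∈ P i to the part of its dominator; injective on P i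
    have key : ((P i) : Set V).InjOn (fun v => (hcover (u v)).choose) := by
      intro v hv w hw hvw
      have hv' : v ∈ P i := hv
      have hw' : w ∈ P i := hw
      obtain ⟨huS, hadj⟩ := hu v hv'
      obtain ⟨hwS, hadjw⟩ := hu w hw'
      set j := (hcover (u v)).choose with hj
      have hjv : u v ∈ P j := (hcover (u v)).choose_spec
      have hjw : u w ∈ P j := by
        have := (hcover (u w)).choose_spec
        simpa [← hvw] using this
      have hji : j ≠ i := by
        intro hji
        exact h (u v) huS (hji ▸ hjv)
      have hsub := honeEdge j i hji
      have h1 : (u v, v) ∈ {e : V × V | e.1 ∈ P j ∧ e.2 ∈ P i ∧ G.Adj e.1 e.2} :=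
        ⟨hjv, hv', hadj⟩
      have h2 : (u w, w) ∈ {e : V × V | e.1 ∈ P j ∧ e.2 ∈ P i ∧ G.Adj e.1 e.2} :=
        ⟨hjw, hw', hadjw⟩
      have := hsub h1 h2
      exact congrArg Prod.snd this
    have hcard : (P i).card ≤ (Finset.univ : Finset (Fin k)).card :=
      Finset.card_le_card_of_injOn _ (fun v _ => Finset.mem_univ _) key
    rw [Finset.card_fin] at hcard
    exact absurd hcard (not_le.mpr (hsize i))
  -- every dominating set has at least k elements
  have Lcard : ∀ S : Finset V, Dominates G S → k ≤ S.card := by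
    intro S hS
    choose r hr1 hr2 using Lmeet S hS
    have inj : Set.InjOn r ↑(Finset.univ : Finset (Fin k)) := by
      intro i _ j _ hij
      exact huniq (r i) i j (hr2 i) (hij ▸ hr2 j)
    have := Finset.card_le_card_of_injOn r (fun i _ => hr1 i) inj
    simpa [Finset.card_fin] using this
  -- the family of transversals
  set F : Set (Finset V) := {S | S.card = k ∧ ∀ i, ∃ v ∈ S, v ∈ P i} with hF
  -- members of F dominate
  have hFdom : ∀ S ∈ F, Dominates G S := by
    intro S hS v
    obtain ⟨i, hvi⟩ := hcover v
    obtain ⟨u, huS, hui⟩ := hS.2 i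
    by_cases huv : u = v
    · exact Or.inl (huv ▸ huS)
    · exact Or.inr ⟨u, huS, hclique i hui hvi huv⟩
  -- moving condition
  have hF2 : ∀ S ∈ F, ∀ v ∉ S, ∃ S' ∈ F, AdjacentSets G S S' ∧ v ∈ S' := by
    intro S hS v hv
    obtain ⟨i, hvi⟩ := hcover v
    obtain ⟨u, huS, hui⟩ := hS.2 i
    have huv : u ≠ v := fun h => hv (h ▸ huS)
    have hadj : G.Adj u v := hclique i hui hvi huv
    refine ⟨insert v (S.erase u), ?_, ⟨u, v, huS, hv, hadj, rfl⟩, Finset.mem_insert_self _ _⟩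
    constructor
    · have hvne : v ∉ S.erase u := fun h => hv (Finset.mem_of_mem_erase h)
      rw [Finset.card_insert_of_notMem hvne, Finset.card_erase_of_mem huS, hS.1]
      exact Nat.succ_pred_eq_of_pos i.pos
    · intro j
      by_cases hji : j = i
      · exact ⟨v, Finset.mem_insert_self _ _, hji ▸ hvi⟩
      · obtain ⟨w, hwS, hwj⟩ := hS.2 j
        have hwu : w ≠ u := fun h => hji (huniq w j i hwj (h ▸ hui))
        exact ⟨w, Finset.mem_insert_of_mem (Finset.mem_erase.mpr ⟨hwu, hwS⟩), hwj⟩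
  -- closure condition
  have hF3 : ∀ S ∈ F, ∀ S', Dominates G S' → AdjacentSets G S S' → S' ∈ F := by
    intro S hS S' hdomS' hadj
    obtain ⟨v, v', hvS, hv'S, _, hS'⟩ := hadj
    have hkpos : 0 < k := hS.1 ▸ Finset.card_pos.mpr ⟨v, hvS⟩
    constructor
    · have hv'ne : v' ∉ S.erase v := fun h => hv'S (Finset.mem_of_mem_erase h)
      rw [hS', Finset.card_insert_of_notMem hv'ne, Finset.card_erase_of_mem hvS, hS.1]
      exact Nat.succ_pred_eq_of_pos hkpos
    · exact Lmeet S' hdomS'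
  -- a transversal exists
  set r0 : Fin k → V := fun i => (hne i).choose with hr0
  have hr0mem : ∀ i, r0 i ∈ P i := fun i => (hne i).choose_spec
  have hr0inj : Function.Injective r0 := by
    intro i j hij
    exact huniq (r0 i) i j (hr0mem i) (hij ▸ hr0mem j)
  set S0 : Finset V := Finset.image r0 Finset.univ with hS0
  have hS0F : S0 ∈ F := by
    constructor
    · rw [hS0, Finset.card_image_of_injective _ hr0inj, Finset.card_fin]
    · intro i
      exact ⟨r0 i, Finset.mem_image_of_mem _ (Finset.mem_univ i), hr0mem i⟩
  -- conclude
  have hkmem : k ∈ {n | ∃ S : Finset V, AutDomSet G S ∧ S.card = n} :=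
    ⟨S0, ⟨F, ⟨hFdom, hF2, hF3⟩, hS0F⟩, hS0F.1⟩
  have hlb : ∀ n ∈ {n | ∃ S : Finset V, AutDomSet G S ∧ S.card = n}, k ≤ n := by
    rintro n ⟨S, ⟨F', hF', hSF'⟩, rfl⟩
    exact Lcard S (hF'.1 S hSF')
  exact le_antisymm (Nat.sInf_le hkmem) (le_csInf ⟨k, hkmem⟩ hlb)
end

section
/- The autonomous domination number of a disjoint union of two graphs is the sum of their autonomous domination numbers. -/
open SimpleGraph

variable {V : Type*} [DecidableEq V]

/-- The disjoint union of two simple graphs. -/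
def disjUnionGraph {α β : Type*} (G : SimpleGraph α) (H : SimpleGraph β) :
    SimpleGraph (α ⊕ β) where
  Adj x y := match x, y with
    | .inl a, .inl b => G.Adj a b
    | .inr a, .inr b => H.Adj a b
    | _, _ => False
  symm := by constructor; rintro (a | a) (b | b) h <;> simp_all [SimpleGraph.adj_comm]
  loopless := by constructor; rintro (a | a) h <;> simp_all

/-!
Dominating sets and guard moves of the disjoint union split componentwise, hence so do
autonomously dominating sets: `S` is one iff both traces `S.toLeft` and `S.toRight` are.
Projecting a family of the union to either side gives a family there; conversely, the sets whose
traces lie in given families of `G` and `H` form a family of the union. As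
`#S = #S.toLeft + #S.toRight` and the whole vertex set is autonomously dominating (so each minimum
is attained), the numbers add.
-/

open Finset Sum

lemma autDomSet_univ [Fintype V] (G : SimpleGraph V) : AutDomSet G univ := by
  refine ⟨{univ}, ⟨?_, ?_, ?_⟩, rfl⟩
  · rintro _ rfl v
    exact .inl (mem_univ v)
  · rintro _ rfl v hv
    exact absurd (mem_univ v) hv
  · rintro _ rfl S' - ⟨-, v', -, hv', -⟩
    exact absurd (mem_univ v') hv'

lemma autDomNum_le_card {G : SimpleGraph V} {S : Finset V} (h : AutDomSet G S) :
    autDomNum G ≤ #S :=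
  Nat.sInf_le ⟨S, h, rfl⟩

lemma exists_autDomSet_card_eq_autDomNum [Fintype V] (G : SimpleGraph V) :
    ∃ S, AutDomSet G S ∧ #S = autDomNum G :=
  Nat.sInf_mem (s := {k | ∃ S, AutDomSet G S ∧ #S = k}) ⟨_, univ, autDomSet_univ G, rfl⟩

section DisjUnion

variable {α β : Type*} {G : SimpleGraph α} {H : SimpleGraph β}

lemma Finset.eq_iff_toLeft_eq_and_toRight_eq {u v : Finset (α ⊕ β)} :
    u = v ↔ u.toLeft = v.toLeft ∧ u.toRight = v.toRight :=
  sumEquiv.injective.eq_iff.symm.trans Prod.ext_iff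

lemma dominates_disjUnionGraph_iff {S : Finset (α ⊕ β)} :
    Dominates (disjUnionGraph G H) S ↔ Dominates G S.toLeft ∧ Dominates H S.toRight := by
  simp [Dominates, Sum.forall, Sum.exists, disjUnionGraph]

variable [DecidableEq α] [DecidableEq β]

@[simp] lemma Finset.toLeft_erase_inl (u : Finset (α ⊕ β)) (a : α) :
    (u.erase (inl a)).toLeft = u.toLeft.erase a := by ext; simp

@[simp] lemma Finset.toLeft_erase_inr (u : Finset (α ⊕ β)) (b : β) :
    (u.erase (inr b)).toLeft = u.toLeft := by ext; simp

@[simp] lemma Finset.toRight_erase_inl (u : Finset (α ⊕ β)) (a : α) :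
    (u.erase (inl a)).toRight = u.toRight := by ext; simp

@[simp] lemma Finset.toRight_erase_inr (u : Finset (α ⊕ β)) (b : β) :
    (u.erase (inr b)).toRight = u.toRight.erase b := by ext; simp

lemma adjacentSets_disjUnionGraph_iff {S S' : Finset (α ⊕ β)} :
    AdjacentSets (disjUnionGraph G H) S S' ↔
      (AdjacentSets G S.toLeft S'.toLeft ∧ S'.toRight = S.toRight) ∨
      (S'.toLeft = S.toLeft ∧ AdjacentSets H S.toRight S'.toRight) := by
  simp [AdjacentSets, Sum.exists, disjUnionGraph, Finset.eq_iff_toLeft_eq_and_toRight_eq]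
  aesop

namespace AutFamily

lemma image_toLeft {F : Set (Finset (α ⊕ β))} (hF : AutFamily (disjUnionGraph G H) F) :
    AutFamily G (toLeft '' F) := by
  obtain ⟨hdom, hmove, hclosed⟩ := hF
  refine ⟨?_, ?_, ?_⟩
  · rintro _ ⟨S, hS, rfl⟩
    exact (dominates_disjUnionGraph_iff.1 (hdom S hS)).1
  · rintro _ ⟨S, hS, rfl⟩ a ha
    obtain ⟨S', hS', hadj, haS'⟩ := hmove S hS (inl a) (mt mem_toLeft.2 ha)
    rcases adjacentSets_disjUnionGraph_iff.1 hadj with ⟨hleft, -⟩ | ⟨hsame, -⟩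
    · exact ⟨S'.toLeft, ⟨S', hS', rfl⟩, hleft, mem_toLeft.2 haS'⟩
    · exact absurd (hsame ▸ mem_toLeft.2 haS') ha
  · rintro _ ⟨S, hS, rfl⟩ A' hA' hadj
    have hdomH := (dominates_disjUnionGraph_iff.1 (hdom S hS)).2
    refine ⟨A'.disjSum S.toRight, hclosed S hS _ ?_ ?_, toLeft_disjSum⟩
    · exact dominates_disjUnionGraph_iff.2 ⟨by simpa using hA', by simpa using hdomH⟩
    · exact adjacentSets_disjUnionGraph_iff.2 (.inl ⟨by simpa using hadj, toRight_disjSum⟩)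

lemma image_toRight {F : Set (Finset (α ⊕ β))} (hF : AutFamily (disjUnionGraph G H) F) :
    AutFamily H (toRight '' F) := by
  obtain ⟨hdom, hmove, hclosed⟩ := hF
  refine ⟨?_, ?_, ?_⟩
  · rintro _ ⟨S, hS, rfl⟩
    exact (dominates_disjUnionGraph_iff.1 (hdom S hS)).2
  · rintro _ ⟨S, hS, rfl⟩ b hb
    obtain ⟨S', hS', hadj, hbS'⟩ := hmove S hS (inr b) (mt mem_toRight.2 hb)
    rcases adjacentSets_disjUnionGraph_iff.1 hadj with ⟨-, hsame⟩ | ⟨-, hright⟩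
    · exact absurd (hsame ▸ mem_toRight.2 hbS') hb
    · exact ⟨S'.toRight, ⟨S', hS', rfl⟩, hright, mem_toRight.2 hbS'⟩
  · rintro _ ⟨S, hS, rfl⟩ B' hB' hadj
    have hdomG := (dominates_disjUnionGraph_iff.1 (hdom S hS)).1
    refine ⟨S.toLeft.disjSum B', hclosed S hS _ ?_ ?_, toRight_disjSum⟩
    · exact dominates_disjUnionGraph_iff.2 ⟨by simpa using hdomG, by simpa using hB'⟩
    · exact adjacentSets_disjUnionGraph_iff.2 (.inr ⟨toLeft_disjSum, by simpa using hadj⟩)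

lemma disjSum {F₁ : Set (Finset α)} {F₂ : Set (Finset β)}
    (h₁ : AutFamily G F₁) (h₂ : AutFamily H F₂) :
    AutFamily (disjUnionGraph G H) {S | S.toLeft ∈ F₁ ∧ S.toRight ∈ F₂} := by
  obtain ⟨hdom₁, hmove₁, hclosed₁⟩ := h₁
  obtain ⟨hdom₂, hmove₂, hclosed₂⟩ := h₂
  refine ⟨fun S ⟨hS₁, hS₂⟩ ↦ dominates_disjUnionGraph_iff.2 ⟨hdom₁ _ hS₁, hdom₂ _ hS₂⟩, ?_, ?_⟩
  · rintro S ⟨hS₁, hS₂⟩ (a | b) hv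
    · obtain ⟨A', hA', hadj, haA'⟩ := hmove₁ _ hS₁ a (mt mem_toLeft.1 hv)
      refine ⟨A'.disjSum S.toRight, ⟨by simpa, by simpa⟩, ?_, by simpa⟩
      exact adjacentSets_disjUnionGraph_iff.2 (.inl ⟨by simpa, toRight_disjSum⟩)
    · obtain ⟨B', hB', hadj, hbB'⟩ := hmove₂ _ hS₂ b (mt mem_toRight.1 hv)
      refine ⟨S.toLeft.disjSum B', ⟨by simpa, by simpa⟩, ?_, by simpa⟩
      exact adjacentSets_disjUnionGraph_iff.2 (.inr ⟨toLeft_disjSum, by simpa⟩)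
  · rintro S ⟨hS₁, hS₂⟩ S' hS' hadj
    obtain ⟨hdomG, hdomH⟩ := dominates_disjUnionGraph_iff.1 hS'
    rcases adjacentSets_disjUnionGraph_iff.1 hadj with ⟨hleft, hsame⟩ | ⟨hsame, hright⟩
    · exact ⟨hclosed₁ _ hS₁ _ hdomG hleft, hsame ▸ hS₂⟩
    · exact ⟨hsame ▸ hS₁, hclosed₂ _ hS₂ _ hdomH hright⟩

end AutFamily

lemma autDomSet_disjUnionGraph_iff {S : Finset (α ⊕ β)} :
    AutDomSet (disjUnionGraph G H) S ↔ AutDomSet G S.toLeft ∧ AutDomSet H S.toRight :=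
  ⟨fun ⟨_, hF, hS⟩ ↦ ⟨⟨_, hF.image_toLeft, S, hS, rfl⟩, ⟨_, hF.image_toRight, S, hS, rfl⟩⟩,
    fun ⟨⟨_, h₁, hS₁⟩, ⟨_, h₂, hS₂⟩⟩ ↦ ⟨_, h₁.disjSum h₂, hS₁, hS₂⟩⟩

end DisjUnion

/-- the autonomous domination number of a disjoint union is the sum of
the autonomous domination numbers. -/
theorem autDomNum_disjUnion {α β : Type*} [DecidableEq α] [DecidableEq β]
    [Fintype α] [Fintype β] (G : SimpleGraph α) (H : SimpleGraph β) :
    autDomNum (disjUnionGraph G H) = autDomNum G + autDomNum H := by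
  obtain ⟨A, hA, hAcard⟩ := exists_autDomSet_card_eq_autDomNum G
  obtain ⟨B, hB, hBcard⟩ := exists_autDomSet_card_eq_autDomNum H
  obtain ⟨S, hS, hScard⟩ := exists_autDomSet_card_eq_autDomNum (disjUnionGraph G H)
  rw [autDomSet_disjUnionGraph_iff] at hS
  have hAB : AutDomSet (disjUnionGraph G H) (A.disjSum B) :=
    autDomSet_disjUnionGraph_iff.2 (by simpa using ⟨hA, hB⟩)
  refine le_antisymm ?_ ?_
  · calc autDomNum (disjUnionGraph G H)
        ≤ #(A.disjSum B) := autDomNum_le_card hAB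
      _ = autDomNum G + autDomNum H := by rw [card_disjSum, hAcard, hBcard]
  · calc autDomNum G + autDomNum H
        ≤ #S.toLeft + #S.toRight := add_le_add (autDomNum_le_card hS.1) (autDomNum_le_card hS.2)
      _ = autDomNum (disjUnionGraph G H) := by rw [card_toLeft_add_card_toRight, hScard]
end

section
/- For natural numbers p ≤ q, the autonomous domination number of the Cartesian product K_p □ K_q equals p. -/
open SimpleGraph

variable {V : Type*} [DecidableEq V]

lemma dom_of_rows {p q : ℕ} {S : Finset (Fin p × Fin q)}
    (h : ∀ i : Fin p, ∃ j, (i, j) ∈ S) :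
    Dominates ((⊤ : SimpleGraph (Fin p)) □ (⊤ : SimpleGraph (Fin q))) S := by
  intro v
  obtain ⟨j, hj⟩ := h v.1
  by_cases hv : j = v.2
  · left; rwa [hv, Prod.mk.eta] at hj
  · right
    exact ⟨(v.1, j), hj, Or.inr ⟨hv, rfl⟩⟩

lemma dom_of_cols {p q : ℕ} {S : Finset (Fin p × Fin q)}
    (h : ∀ j : Fin q, ∃ i, (i, j) ∈ S) :
    Dominates ((⊤ : SimpleGraph (Fin p)) □ (⊤ : SimpleGraph (Fin q))) S := by
  intro v
  obtain ⟨i, hi⟩ := h v.2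
  by_cases hv : i = v.1
  · left; rwa [hv, Prod.mk.eta] at hi
  · right
    exact ⟨(i, v.2), hi, Or.inl ⟨hv, rfl⟩⟩

lemma rows_or_cols {p q : ℕ} {S : Finset (Fin p × Fin q)}
    (h : Dominates ((⊤ : SimpleGraph (Fin p)) □ (⊤ : SimpleGraph (Fin q))) S) :
    (∀ i : Fin p, ∃ j, (i, j) ∈ S) ∨ (∀ j : Fin q, ∃ i, (i, j) ∈ S) := by
  by_contra hc
  push_neg at hc
  obtain ⟨⟨i, hi⟩, ⟨j, hj⟩⟩ := hc
  rcases h (i, j) with h1 | ⟨⟨a, b⟩, hu, hadj⟩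
  · exact hi j h1
  · rcases hadj with ⟨_, h2⟩ | ⟨_, h2⟩
    · cases h2; exact hj a hu
    · cases h2; exact hi b hu

lemma autFamily_all {p q : ℕ} :
    AutFamily ((⊤ : SimpleGraph (Fin p)) □ (⊤ : SimpleGraph (Fin q)))
      {S | Dominates ((⊤ : SimpleGraph (Fin p)) □ (⊤ : SimpleGraph (Fin q))) S} := by
  refine ⟨fun S hS => hS, ?_, fun S _ S' hS' _ => hS'⟩
  intro S hS v hv
  rcases rows_or_cols hS with hr | hc
  · obtain ⟨j', hj'⟩ := hr v.1
    have hne : j' ≠ v.2 := by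
      rintro rfl; exact hv (by simpa using hj')
    refine ⟨insert v (S.erase (v.1, j')), ?_, ⟨(v.1, j'), v, hj', hv,
        Or.inr ⟨hne, rfl⟩, rfl⟩, Finset.mem_insert_self _ _⟩
    apply dom_of_rows
    intro i
    by_cases hi : i = v.1
    · exact ⟨v.2, by simp [hi, Prod.mk.eta]⟩
    · obtain ⟨j, hj⟩ := hr i
      exact ⟨j, Finset.mem_insert_of_mem (Finset.mem_erase.mpr ⟨by simp [hi], hj⟩)⟩
  · obtain ⟨i', hi'⟩ := hc v.2
    have hne : i' ≠ v.1 := by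
      rintro rfl; exact hv (by simpa using hi')
    refine ⟨insert v (S.erase (i', v.2)), ?_, ⟨(i', v.2), v, hi', hv,
        Or.inl ⟨hne, rfl⟩, rfl⟩, Finset.mem_insert_self _ _⟩
    apply dom_of_cols
    intro j
    by_cases hj : j = v.2
    · exact ⟨v.1, by simp [hj, Prod.mk.eta]⟩
    · obtain ⟨i, hi⟩ := hc j
      exact ⟨i, Finset.mem_insert_of_mem (Finset.mem_erase.mpr ⟨by simp [hj], hi⟩)⟩

lemma card_le_of_dom {p q : ℕ} (hpq : p ≤ q) {S : Finset (Fin p × Fin q)}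
    (h : Dominates ((⊤ : SimpleGraph (Fin p)) □ (⊤ : SimpleGraph (Fin q))) S) :
    p ≤ S.card := by
  by_contra hlt
  push_neg at hlt
  have hR : S.image Prod.fst ≠ Finset.univ := by
    intro heq
    have := Finset.card_image_le (s := S) (f := Prod.fst)
    rw [heq, Finset.card_univ, Fintype.card_fin] at this
    omega
  have hC : S.image Prod.snd ≠ Finset.univ := by
    intro heq
    have := Finset.card_image_le (s := S) (f := Prod.snd)
    rw [heq, Finset.card_univ, Fintype.card_fin] at this
    omega
  obtain ⟨i, hi⟩ : ∃ i, i ∉ S.image Prod.fst := by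
    by_contra hcon; push_neg at hcon
    exact hR (Finset.eq_univ_iff_forall.mpr hcon)
  obtain ⟨j, hj⟩ : ∃ j, j ∉ S.image Prod.snd := by
    by_contra hcon; push_neg at hcon
    exact hC (Finset.eq_univ_iff_forall.mpr hcon)
  rcases h (i, j) with h1 | ⟨u, hu, hadj⟩
  · exact hi (Finset.mem_image.mpr ⟨_, h1, rfl⟩)
  · rcases hadj with ⟨_, h2⟩ | ⟨_, h2⟩
    · exact hj (Finset.mem_image.mpr ⟨u, hu, h2⟩)
    · exact hi (Finset.mem_image.mpr ⟨u, hu, h2⟩)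


/-- `γ_aut(K_p □ K_q) = p` for `p ≤ q`. -/
theorem autDomNum_boxProd_complete (p q : ℕ) (hpq : p ≤ q) :
    autDomNum ((⊤ : SimpleGraph (Fin p)) □ (⊤ : SimpleGraph (Fin q))) = p := by
  have hmem : p ∈ {k | ∃ S : Finset (Fin p × Fin q),
      AutDomSet ((⊤ : SimpleGraph (Fin p)) □ (⊤ : SimpleGraph (Fin q))) S ∧ S.card = k} := by
    refine ⟨Finset.univ.image (fun i : Fin p => (i, Fin.castLE hpq i)), ⟨_, autFamily_all, ?_⟩, ?_⟩
    · show Dominates _ _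
      apply dom_of_rows
      intro i
      exact ⟨Fin.castLE hpq i, Finset.mem_image.mpr ⟨i, Finset.mem_univ i, rfl⟩⟩
    · rw [Finset.card_image_of_injective _ (fun a b hab => (Prod.mk.injEq _ _ _ _ ▸ hab).1),
        Finset.card_univ, Fintype.card_fin]
  refine le_antisymm (Nat.sInf_le hmem) ?_
  have hne : Set.Nonempty _ := ⟨p, hmem⟩
  obtain ⟨S, ⟨F, hF, hSF⟩, hcard⟩ := Nat.sInf_mem hne
  rw [autDomNum, ← hcard]
  exact card_le_of_dom hpq (hF.1 S hSF)
end
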